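/- Let N ≥ 3 and let ψ ≠ 0 be a symmetric N-linear form on ℂ^k. If unit vectors α₁,…,α_N maximize |ψ(u₁,…,u_N)| over all N-tuples of unit vectors, then all α_i are equal up to complex phases, i.e., span_ℂ{α₁,…,α_N} is one-dimensional. -/

import Mathlib

/-!
At a maximizer `u`, each partial form `x ↦ ψ (u[m := x])` has norm `‖ψ u‖` and attains it at the
unit vector `u m`, so by the Riesz representation it equals `ψ u * ⟪u m, x⟫`. With these first-order
identities and symmetry, replacing both `u i` and `u j` by the unit vector along `u i + ω • u j`
(`‖ω‖ = 1`) multiplies `ψ u` by `ω`, so it produces another maximizer. Its first-order identity in a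
third slot `l`, for `ω = 1` and `ω = I`, gives `ψ (u[l := w, j := u i]) = ψ u ⟪u j, u i⟫ ⟪u l, w⟫`;
exchanging the roles of `j` and `l` then yields `⟪u i, u j⟫ • u l = ⟪u i, u l⟫ • u j`.
If `u i ⊥ u j`, this relation makes `u l` orthogonal to both, while the same relation for the
rotated maximizer (`ω = 1`) puts `u l` on the line of `u i + u j`, which is absurd. So all Gram
entries are nonzero, and the relation makes all `u i` proportional.
-/

open Function
open scoped InnerProductSpace ComplexConjugate

namespace MultilinearMap

variable {R ι M F : Type*} [CommSemiring R] [AddCommMonoid M] [Module R M]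

def IsSymmetric [AddCommMonoid F] [Module R F] (f : MultilinearMap R (fun _ : ι => M) F) : Prop :=
  ∀ (σ : Equiv.Perm ι) (v : ι → M), f (v ∘ σ) = f v

variable [DecidableEq ι]

theorem IsSymmetric.map_update_update_swap [AddCommMonoid F] [Module R F]
    {f : MultilinearMap R (fun _ : ι => M) F} (hf : f.IsSymmetric) {i j : ι} (hij : i ≠ j)
    (u : ι → M) (x y : M) :
    f (update (update u i x) j y) = f (update (update u i y) j x) := by
  rw [← hf (Equiv.swap i j)]
  congr 1
  ext m
  rcases eq_or_ne m i with rfl | hmi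
  · simp [hij]
  rcases eq_or_ne m j with rfl | hmj
  · simp [hij]
  · simp [Equiv.swap_apply_of_ne_of_ne hmi hmj, hmi, hmj]

theorem IsSymmetric.map_update_update_smul_add_smul {f : MultilinearMap R (fun _ : ι => M) R}
    (hf : f.IsSymmetric) {i j : ι} (hij : i ≠ j) (u : ι → M) (c ω : R) :
    f (update (update u i (c • (u i + ω • u j))) j (c • (u i + ω • u j))) =
      c ^ 2 * (f (update u j (u i)) + 2 * ω * f u + ω ^ 2 * f (update u i (u j))) := by
  have hj : update (update u i (u j)) j (u j) = update u i (u j) :=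
    update_eq_self_iff.mpr (update_of_ne hij.symm _ _).symm
  rw [update_comm hij]
  simp only [f.map_update_smul, f.map_update_add, smul_eq_mul]
  rw [← update_comm hij, ← update_comm hij]
  simp only [f.map_update_smul, f.map_update_add, smul_eq_mul, update_eq_self]
  rw [hf.map_update_update_swap hij, update_eq_self, update_eq_self, hj]
  ring

end MultilinearMap

theorem LinearMap.apply_eq_mul_inner_of_norm_le {𝕜 E : Type*} [RCLike 𝕜] [NormedAddCommGroup E]
    [InnerProductSpace 𝕜 E] [CompleteSpace E] (f : E →ₗ[𝕜] 𝕜) {e : E} (he : ‖e‖ = 1)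
    (hf : ∀ x, ‖f x‖ ≤ ‖f e‖ * ‖x‖) (x : E) : f x = f e * ⟪e, x⟫_𝕜 := by
  set a := (InnerProductSpace.toDual 𝕜 E).symm (f.mkContinuous _ hf)
  have hfa : ∀ y, f y = ⟪a, y⟫_𝕜 := fun y => by simp [a, InnerProductSpace.toDual_symm_apply]
  have hea : ‖⟪e, a⟫_𝕜‖ = ‖e‖ * ‖a‖ := by
    refine le_antisymm (norm_inner_le_norm e a) ?_
    have h := hf a
    rw [hfa, hfa, inner_self_eq_norm_sq_to_K, ← norm_inner_symm] at h
    simp only [norm_pow, RCLike.norm_ofReal, abs_norm] at h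
    rw [he, one_mul]
    nlinarith [norm_nonneg a, norm_nonneg (⟪e, a⟫_𝕜)]
  obtain he0 | ha := (norm_inner_eq_norm_tfae 𝕜 e a).out 0 1 |>.mp hea
  · simp [he0] at he
  rw [inner_self_eq_one_of_norm_eq_one he, div_one] at ha
  rw [hfa, hfa, ha, inner_smul_left, inner_smul_left, inner_self_eq_one_of_norm_eq_one he, mul_one]

section Complex

variable {ι E : Type*} [NormedAddCommGroup E] [InnerProductSpace ℂ E]

theorem norm_add_smul_sq_mul {x y : E} (hx : ‖x‖ = 1) (hy : ‖y‖ = 1) {ω : ℂ} (hω : ‖ω‖ = 1) :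
    (‖x + ω • y‖ : ℂ) ^ 2 * ω = ⟪y, x⟫_ℂ + 2 * ω + ω ^ 2 * ⟪x, y⟫_ℂ := by
  have hωω : conj ω * ω = 1 := by
    rw [mul_comm, Complex.mul_conj, Complex.normSq_eq_norm_sq, hω]; norm_num
  have hsq : (‖x + ω • y‖ : ℂ) ^ 2 = ⟪x + ω • y, x + ω • y⟫_ℂ := by
    simp [inner_self_eq_norm_sq_to_K]
  rw [hsq]
  simp only [inner_add_left, inner_add_right, inner_smul_left, inner_smul_right,
    inner_self_eq_one_of_norm_eq_one hx, inner_self_eq_one_of_norm_eq_one hy]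
  linear_combination (ω + ⟪y, x⟫_ℂ) * hωω

structure IsUnitMaximizer (ψ : MultilinearMap ℂ (fun _ : ι => E) ℂ) (u : ι → E) : Prop where
  norm_eq_one : ∀ i, ‖u i‖ = 1
  norm_le : ∀ v : ι → E, (∀ i, ‖v i‖ = 1) → ‖ψ v‖ ≤ ‖ψ u‖

theorem IsUnitMaximizer.ne_zero {ψ : MultilinearMap ℂ (fun _ : ι => E) ℂ} {u : ι → E}
    (hu : IsUnitMaximizer ψ u) (i : ι) : u i ≠ 0 :=
  norm_ne_zero_iff.mp (by simp [hu.norm_eq_one i])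

theorem IsUnitMaximizer.map_ne_zero [Fintype ι] {ψ : MultilinearMap ℂ (fun _ : ι => E) ℂ}
    {u : ι → E} (hu : IsUnitMaximizer ψ u) (hψ : ψ ≠ 0) : ψ u ≠ 0 := by
  intro h0
  refine hψ (MultilinearMap.ext fun v => ?_)
  by_cases hv : ∀ i, v i ≠ 0
  · have h := hu.norm_le (fun i => (‖v i‖⁻¹ : ℂ) • v i) fun i => norm_smul_inv_norm (hv i)
    rw [h0, norm_zero, norm_le_zero_iff, ψ.map_smul_univ, smul_eq_zero] at h
    refine h.resolve_left (Finset.prod_ne_zero_iff.mpr fun i _ => ?_)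
    simpa using hv i
  · obtain ⟨i, hi⟩ := not_forall.mp hv
    exact ψ.map_coord_zero i (not_not.mp hi)

variable [DecidableEq ι]

noncomputable def pairRotation (u : ι → E) (i j : ι) (ω : ℂ) : ι → E :=
  let z := (‖u i + ω • u j‖ : ℂ)⁻¹ • (u i + ω • u j)
  update (update u i z) j z

theorem update_pairRotation {u : ι → E} {i j l : ι} (hli : l ≠ i) (hlj : l ≠ j) (ω : ℂ)
    (w : E) : update (pairRotation u i j ω) l w = pairRotation (update u l w) i j ω := by
  simp only [pairRotation, update_of_ne hli.symm, update_of_ne hlj.symm]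
  rw [update_comm hlj.symm, update_comm hli.symm]

theorem pairRotation_apply_of_ne {u : ι → E} {i j l : ι} (hli : l ≠ i) (hlj : l ≠ j) (ω : ℂ) :
    pairRotation u i j ω l = u l := by
  simp [pairRotation, hli, hlj]

namespace IsUnitMaximizer

variable {ψ : MultilinearMap ℂ (fun _ : ι => E) ℂ} {u : ι → E}

theorem norm_map_update_le (hu : IsUnitMaximizer ψ u) (m : ι) (x : E) :
    ‖ψ (update u m x)‖ ≤ ‖ψ u‖ * ‖x‖ := by
  rcases eq_or_ne x 0 with rfl | hx
  · simp
  have hunit : ∀ i, ‖update u m ((‖x‖⁻¹ : ℂ) • x) i‖ = 1 :=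
    (forall_update_iff u fun _ v => ‖v‖ = 1).mpr
      ⟨norm_smul_inv_norm hx, fun i _ => hu.norm_eq_one i⟩
  calc ‖ψ (update u m x)‖ = ‖x‖ * ‖ψ (update u m ((‖x‖⁻¹ : ℂ) • x))‖ := by
        rw [ψ.map_update_smul, norm_smul, ← mul_assoc]
        simp [hx]
    _ ≤ ‖x‖ * ‖ψ u‖ := by gcongr; exact hu.norm_le _ hunit
    _ = ‖ψ u‖ * ‖x‖ := mul_comm _ _

variable [CompleteSpace E]

theorem map_update (hu : IsUnitMaximizer ψ u) (m : ι) (x : E) :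
    ψ (update u m x) = ψ u * ⟪u m, x⟫_ℂ := by
  simpa using (ψ.toLinearMap u m).apply_eq_mul_inner_of_norm_le (hu.norm_eq_one m)
    (by simpa using hu.norm_map_update_le m) x

theorem map_pairRotation (hu : IsUnitMaximizer ψ u) (hψ : ψ.IsSymmetric) {i j : ι} (hij : i ≠ j)
    {ω : ℂ} (hω : ‖ω‖ = 1) (hv : u i + ω • u j ≠ 0) :
    ψ (pairRotation u i j ω) = ω * ψ u := by
  have hnorm := norm_add_smul_sq_mul (hu.norm_eq_one i) (hu.norm_eq_one j) hω
  have hv' : (‖u i + ω • u j‖ : ℂ) ≠ 0 := by exact_mod_cast norm_ne_zero_iff.mpr hv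
  rw [pairRotation, hψ.map_update_update_smul_add_smul hij, hu.map_update, hu.map_update]
  field_simp
  linear_combination -ψ u * hnorm

theorem rotate (hu : IsUnitMaximizer ψ u) (hψ : ψ.IsSymmetric) {i j : ι} (hij : i ≠ j)
    {ω : ℂ} (hω : ‖ω‖ = 1) (hv : u i + ω • u j ≠ 0) :
    IsUnitMaximizer ψ (pairRotation u i j ω) where
  norm_eq_one := by
    have hz := norm_smul_inv_norm (𝕜 := ℂ) hv
    refine (forall_update_iff _ fun _ v => ‖v‖ = 1).mpr ⟨hz, fun m _ => ?_⟩
    exact (forall_update_iff u fun _ v => ‖v‖ = 1).mpr ⟨hz, fun i _ => hu.norm_eq_one i⟩ m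
  norm_le v hv1 := by
    rw [hu.map_pairRotation hψ hij hω hv, norm_mul, hω, one_mul]
    exact hu.norm_le v hv1

theorem map_update_update_add_sq_mul (hu : IsUnitMaximizer ψ u) (hψ : ψ.IsSymmetric)
    {i j l : ι} (hij : i ≠ j) (hli : l ≠ i) (hlj : l ≠ j) {ω : ℂ} (hω : ‖ω‖ = 1) (w : E) :
    ψ (update (update u l w) j (u i)) + ω ^ 2 * ψ (update (update u l w) i (u j)) =
      ψ u * ⟪u l, w⟫_ℂ * (⟪u j, u i⟫_ℂ + ω ^ 2 * ⟪u i, u j⟫_ℂ) := by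
  wlog hv : u i + ω • u j ≠ 0 generalizing ω
  -- otherwise use `-ω`, as the two vectors sum to `2 • u i ≠ 0`
  · have hv' : u i + (-ω) • u j ≠ 0 := by
      intro h
      have h2 : (2 : ℂ) • u i = 0 := by
        rw [two_smul]
        linear_combination (norm := module) h + not_not.mp hv
      have hi : u i = 0 := by simpa using h2
      simpa [hi] using hu.norm_eq_one i
    simpa using this (by rwa [norm_neg]) hv'
  have hWi : update u l w i = u i := update_of_ne hli.symm _ _
  have hWj : update u l w j = u j := update_of_ne hlj.symm _ _
  have hW : ψ (pairRotation (update u l w) i j ω) = ω * ψ u * ⟪u l, w⟫_ℂ := by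
    rw [← update_pairRotation hli hlj, (hu.rotate hψ hij hω hv).map_update,
      pairRotation_apply_of_ne hli hlj, hu.map_pairRotation hψ hij hω hv]
  rw [pairRotation, hψ.map_update_update_smul_add_smul hij, hWi, hWj, hu.map_update] at hW
  have hnorm := norm_add_smul_sq_mul (hu.norm_eq_one i) (hu.norm_eq_one j) hω
  have hv' : (‖u i + ω • u j‖ : ℂ) ≠ 0 := by exact_mod_cast norm_ne_zero_iff.mpr hv
  field_simp at hW
  linear_combination hW + ψ u * ⟪u l, w⟫_ℂ * hnorm

theorem map_update_update_eq (hu : IsUnitMaximizer ψ u) (hψ : ψ.IsSymmetric)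
    {i j l : ι} (hij : i ≠ j) (hli : l ≠ i) (hlj : l ≠ j) (w : E) :
    ψ (update (update u l w) j (u i)) = ψ u * ⟪u j, u i⟫_ℂ * ⟪u l, w⟫_ℂ := by
  have h1 := hu.map_update_update_add_sq_mul hψ hij hli hlj (ω := 1) (by simp) w
  have hI := hu.map_update_update_add_sq_mul hψ hij hli hlj (ω := Complex.I) (by simp) w
  simp only [one_pow, one_mul, Complex.I_sq] at h1 hI
  linear_combination (h1 + hI) / 2

theorem inner_smul_eq_inner_smul (hu : IsUnitMaximizer ψ u) (hψ : ψ.IsSymmetric)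
    (hψu : ψ u ≠ 0) {i j l : ι} (hij : i ≠ j) (hli : l ≠ i) (hlj : l ≠ j) :
    ⟪u i, u j⟫_ℂ • u l = ⟪u i, u l⟫_ℂ • u j := by
  refine ext_inner_right ℂ fun w => ?_
  have h := hu.map_update_update_eq hψ hij hli hlj w
  rw [hψ.map_update_update_swap hlj, update_comm hlj,
    hu.map_update_update_eq hψ hli.symm hij.symm hlj.symm w, mul_assoc, mul_assoc] at h
  rw [inner_smul_left, inner_smul_left, inner_conj_symm, inner_conj_symm]
  exact (mul_left_cancel₀ hψu h).symm

theorem inner_ne_zero (hu : IsUnitMaximizer ψ u) (hψ : ψ.IsSymmetric) (hψu : ψ u ≠ 0)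
    {i j l : ι} (hij : i ≠ j) (hli : l ≠ i) (hlj : l ≠ j) : ⟪u i, u j⟫_ℂ ≠ 0 := by
  intro h0
  have hil : ⟪u i, u l⟫_ℂ = 0 := by
    have h := hu.inner_smul_eq_inner_smul hψ hψu hij hli hlj
    rw [h0, zero_smul, eq_comm, smul_eq_zero] at h
    exact h.resolve_right (hu.ne_zero j)
  have hjl : ⟪u j, u l⟫_ℂ = 0 := by
    have h := hu.inner_smul_eq_inner_smul hψ hψu hij.symm hlj hli
    rw [inner_eq_zero_symm.mp h0, zero_smul, eq_comm, smul_eq_zero] at h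
    exact h.resolve_right (hu.ne_zero i)
  have hv : u i + (1 : ℂ) • u j ≠ 0 := by
    intro h
    rw [one_smul, add_eq_zero_iff_eq_neg'] at h
    rw [h, inner_neg_right, inner_self_eq_one_of_norm_eq_one (hu.norm_eq_one i)] at h0
    norm_num at h0
  set z := (‖u i + (1 : ℂ) • u j‖ : ℂ)⁻¹ • (u i + (1 : ℂ) • u j)
  have hzi : pairRotation u i j 1 i = z := by simp [pairRotation, z, hij]
  have hzj : pairRotation u i j 1 j = z := by simp [pairRotation, z]
  have hu' := hu.rotate hψ hij (by simp) hv
  have h := hu'.inner_smul_eq_inner_smul hψ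
    (by rwa [hu.map_pairRotation hψ hij (by simp) hv, one_mul]) hij hli hlj
  have hzz : ⟪z, z⟫_ℂ = 1 := inner_self_eq_one_of_norm_eq_one (hzi ▸ hu'.norm_eq_one i)
  have hzl : ⟪z, u l⟫_ℂ = 0 := by simp [z, hil, hjl]
  rw [hzi, hzj, pairRotation_apply_of_ne hli hlj, hzz, hzl, one_smul, zero_smul] at h
  exact hu.ne_zero l h

theorem exists_norm_eq_one_smul (hu : IsUnitMaximizer ψ u) (hψ : ψ.IsSymmetric)
    (hψu : ψ u ≠ 0) {i j l : ι} (hli : l ≠ i) (hlj : l ≠ j) :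
    ∃ c : ℂ, ‖c‖ = 1 ∧ u i = c • u j := by
  rcases eq_or_ne i j with rfl | hij
  · exact ⟨1, by simp, by simp⟩
  have hne := hu.inner_ne_zero hψ hψu hlj hli.symm hij
  have h := hu.inner_smul_eq_inner_smul hψ hψu hlj hli.symm hij
  have hc : u i = ((⟪u l, u j⟫_ℂ)⁻¹ * ⟪u l, u i⟫_ℂ) • u j := by
    rw [mul_smul, ← h, inv_smul_smul₀ hne]
  refine ⟨_, ?_, hc⟩
  simpa [hu.norm_eq_one i, hu.norm_eq_one j, norm_smul] using (congrArg norm hc).symm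

end IsUnitMaximizer

end Complex

theorem stmt_5 (N k : ℕ) (hN : 3 ≤ N)
    (ψ : MultilinearMap ℂ (fun _ : Fin N => EuclideanSpace ℂ (Fin k)) ℂ)
    (hψ : ψ ≠ 0)
    (hsymm : ∀ (σ : Equiv.Perm (Fin N)) (v : Fin N → EuclideanSpace ℂ (Fin k)),
      ψ (v ∘ σ) = ψ v)
    (α : Fin N → EuclideanSpace ℂ (Fin k))
    (hα : ∀ i, ‖α i‖ = 1)
    (hmax : ∀ u : Fin N → EuclideanSpace ℂ (Fin k),
      (∀ i, ‖u i‖ = 1) → ‖ψ u‖ ≤ ‖ψ α‖) :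
    ∀ i j : Fin N, ∃ c : ℂ, ‖c‖ = 1 ∧ α i = c • α j := by
  intro i j
  have hu : IsUnitMaximizer ψ α := ⟨hα, hmax⟩
  obtain ⟨l, hli, hlj⟩ := Cardinal.exists_ne_ne_of_three_le (by simpa using hN) i j
  exact hu.exists_norm_eq_one_smul hsymm (hu.map_ne_zero hψ) hli hlj
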